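/- Each map σ_j (j ∈ I) is a group automorphism of 𝒯^I, and for every pair i ≠ j in I the braid relation of order m_{ij} holds: σ_i∘σ_j∘σ_i∘⋯ = σ_j∘σ_i∘σ_j∘⋯, with m_{ij} factors on each side. -/

import Mathlib

/-!
Braid group action on `𝒯^I` (Corollary `C:T_1-rep` of the paper), where
`𝒯 = 1 + X·ℂ[[X]]` is the group of power series with constant term 1.
-/

open PowerSeries

noncomputable section

/-- The value `m_{ij}` of the Coxeter matrix attached to `t = a_{ij}·a_{ji}`:
`2, 3, 4, 6` according as `t = 0, 1, 2, 3`. -/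
def coxEntry (t : ℤ) : ℕ :=
  if t = 0 then 2 else if t = 1 then 3 else if t = 2 then 4 else 6

/-- A generalized Cartan matrix `(a_{ij})` of finite type, with symmetrizing positive
integers `(d_i)`, together with its Coxeter matrix `(m_{ij})` whose associated Coxeter
group is required to be finite. -/
structure FiniteCartan (I : Type) where
  a : I → I → ℤ
  d : I → ℤ
  cm : CoxeterMatrix I
  a_diag : ∀ i, a i i = 2
  a_offdiag_nonpos : ∀ i j, i ≠ j → a i j ≤ 0
  d_pos : ∀ i, 0 < d i
  d_symmetrizes : ∀ i j, d i * a i j = d j * a j i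
  a_bound : ∀ i j, i ≠ j → a i j * a j i ≤ 3
  cm_offdiag : ∀ i j, i ≠ j → cm i j = coxEntry (a i j * a j i)
  finiteWeyl : Finite cm.Group

/-- `ε_{ij} = (-1)^{δ_{ij}}`. -/
def eps {I : Type} [DecidableEq I] (i j : I) : ℤ := if i = j then -1 else 1

/-- The alternating composition `f ∘ g ∘ f ∘ ⋯` with `n` factors. -/
def braidWord {α : Type*} (f g : α → α) : ℕ → (α → α)
  | 0 => id
  | n + 1 => f ∘ braidWord g f n

/-- Integer powers of a power series over `ℂ` (the `k`-th power of a unit, `k ∈ ℤ`). -/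
def zpowPS (f : PowerSeries ℂ) : ℤ → PowerSeries ℂ
  | Int.ofNat n => f ^ n
  | Int.negSucc n => (f ^ (n + 1))⁻¹

/-- The additive shift `τ_c`: substitution of the power series `X·(1+cX)⁻¹`
(which has zero constant term) into a formal power series. -/
def tauSub (c : ℂ) (f : PowerSeries ℂ) : PowerSeries ℂ :=
  PowerSeries.mk fun m => ∑ n ∈ Finset.range (m + 1),
    coeff n f * coeff m ((X * (1 + C c * X)⁻¹ : PowerSeries ℂ) ^ n)

/-- The set `𝒯^I` of `I`-tuples of power series with constant term `1`. -/
def Tset (I : Type) : Set (I → PowerSeries ℂ) :=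
  {lam | ∀ i, constantCoeff (lam i) = 1}

/-- The operator `σ_j` on `𝒯^I`:
`σ_j(λ)_i = λ_i · ∏_{k=0}^{|a_{ji}|−1} (τ_{−(ħ d_j/2)(|a_{ji}|−2k)} λ_j)^{ε_{ij}}`. -/
def sigmaT {I : Type} [DecidableEq I] (a : I → I → ℤ) (d : I → ℤ) (hbar : ℂ)
    (j : I) (lam : I → PowerSeries ℂ) : I → PowerSeries ℂ := fun i =>
  lam i * ∏ k ∈ Finset.range (a j i).natAbs,
    zpowPS (tauSub (-(hbar * (d j : ℂ) / 2) * (((a j i).natAbs : ℂ) - 2 * (k : ℂ))) (lam j))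
      (eps i j)


open Finset

set_option maxHeartbeats 1000000
set_option linter.unusedSectionVars false

/-- generic substitution (same formula as tauSub) -/
def substPS (g f : PowerSeries ℂ) : PowerSeries ℂ :=
  PowerSeries.mk fun m => ∑ n ∈ Finset.range (m + 1),
    coeff n f * coeff m (g ^ n)

lemma coeff_pow_eq_zero {g : PowerSeries ℂ} (hg : constantCoeff g = 0)
    {m n : ℕ} (h : m < n) : coeff m (g ^ n) = 0 := by
  have : (X : PowerSeries ℂ) ^ n ∣ g ^ n :=
    pow_dvd_pow_of_dvd (PowerSeries.X_dvd_iff.2 hg) n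
  exact (PowerSeries.X_pow_dvd_iff.1 this) m h

lemma coeff_substPS (g f : PowerSeries ℂ) (m : ℕ) :
    coeff m (substPS g f) = ∑ n ∈ Finset.range (m + 1),
      coeff n f * coeff m (g ^ n) := by
  simp [substPS]

lemma coeff_substPS_eq (g f : PowerSeries ℂ) (hg : constantCoeff g = 0)
    {m N : ℕ} (h : m < N) :
    coeff m (substPS g f) = coeff m ((trunc N f).eval₂ C g) := by
  rw [coeff_substPS, eval₂_trunc_eq_sum_range, map_sum]
  rw [← Finset.sum_subset (Finset.range_subset_range.2 h)]
  · apply Finset.sum_congr rfl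
    intro n _
    rw [coeff_C_mul]
  · intro n _ hn
    rw [Finset.mem_range, not_lt] at hn
    rw [coeff_C_mul, coeff_pow_eq_zero hg (lt_of_lt_of_le (Nat.lt_succ_self m) hn), mul_zero]

lemma coeff_eval₂_high (g : PowerSeries ℂ) (hg : constantCoeff g = 0)
    (p : Polynomial ℂ) {N : ℕ} (hp : ∀ i < N, p.coeff i = 0) {m : ℕ} (h : m < N) :
    coeff m (p.eval₂ C g) = 0 := by
  rw [Polynomial.eval₂_eq_sum, Polynomial.sum]
  rw [map_sum]
  apply Finset.sum_eq_zero
  intro n hn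
  have hnN : N ≤ n := by
    by_contra hc
    exact (Polynomial.mem_support_iff.1 hn) (hp n (not_le.1 hc))
  rw [coeff_C_mul, coeff_pow_eq_zero hg (lt_of_lt_of_le h hnN), mul_zero]

lemma substPS_mul (g f h : PowerSeries ℂ) (hg : constantCoeff g = 0) :
    substPS g (f * h) = substPS g f * substPS g h := by
  ext m
  set N := m + 1 with hN
  have hm : m < N := Nat.lt_succ_self m
  rw [coeff_substPS_eq g (f*h) hg hm, PowerSeries.coeff_mul]
  have key : coeff m ((trunc N (f*h)).eval₂ C g)
      = coeff m ((trunc N f * trunc N h).eval₂ C g) := by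
    have hdiff : ∀ i < N, (trunc N f * trunc N h - trunc N (f*h)).coeff i = 0 := by
      intro i hi
      have h2 := coeff_mul_eq_coeff_trunc_mul_trunc f h hi
      rw [← Polynomial.coe_mul, Polynomial.coeff_coe] at h2
      rw [Polynomial.coeff_sub, PowerSeries.coeff_trunc, if_pos hi, ← h2, sub_self]
    have := coeff_eval₂_high g hg _ hdiff hm
    rw [Polynomial.eval₂_sub, map_sub] at this
    linear_combination -this
  rw [key, Polynomial.eval₂_mul, PowerSeries.coeff_mul]
  apply Finset.sum_congr rfl
  intro p hp
  rw [Finset.HasAntidiagonal.mem_antidiagonal] at hp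
  rw [coeff_substPS_eq g f hg (show p.1 < N by omega),
    coeff_substPS_eq g h hg (show p.2 < N by omega)]

lemma substPS_one (g : PowerSeries ℂ) : substPS g 1 = 1 := by
  ext m
  rw [coeff_substPS]
  rw [Finset.sum_eq_single 0]
  · simp
  · intro n _ hn
    rw [coeff_one, if_neg hn, zero_mul]
  · intro h
    simp at h

lemma substPS_pow (g f : PowerSeries ℂ) (hg : constantCoeff g = 0) (n : ℕ) :
    substPS g (f ^ n) = (substPS g f) ^ n := by
  induction n with
  | zero => simpa using substPS_one g
  | succ n ih => rw [pow_succ, substPS_mul _ _ _ hg, ih, pow_succ]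

lemma constantCoeff_substPS (g f : PowerSeries ℂ) :
    constantCoeff (substPS g f) = constantCoeff f := by
  have := coeff_substPS g f 0
  simp only [coeff_zero_eq_constantCoeff] at this
  simpa using this

lemma substPS_C (g : PowerSeries ℂ) (a : ℂ) : substPS g (C a) = C a := by
  ext m
  rw [coeff_substPS]
  rw [Finset.sum_eq_single 0]
  · simp only [coeff_C, if_pos rfl, pow_zero, coeff_one]
    by_cases h : m = 0 <;> simp [h]
  · intro n _ hn
    rw [coeff_C, if_neg hn, zero_mul]
  · intro h; simp at h

lemma substPS_X (g : PowerSeries ℂ) (hg : constantCoeff g = 0) :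
    substPS g X = g := by
  ext m
  rw [coeff_substPS]
  rcases Nat.eq_zero_or_pos m with hm | hm
  · subst hm
    simp [coeff_zero_eq_constantCoeff, hg]
  · rw [Finset.sum_eq_single 1]
    · simp
    · intro n _ hn
      rw [coeff_X, if_neg hn, zero_mul]
    · intro h
      simp only [Finset.mem_range] at h
      omega

lemma substPS_add (g f h : PowerSeries ℂ) :
    substPS g (f + h) = substPS g f + substPS g h := by
  ext m
  simp [coeff_substPS, Finset.sum_add_distrib, add_mul]

lemma substPS_inv (g f : PowerSeries ℂ) (hg : constantCoeff g = 0)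
    (hf : constantCoeff f ≠ 0) : substPS g f⁻¹ = (substPS g f)⁻¹ := by
  have h1 : constantCoeff (substPS g f) ≠ 0 := by
    rw [constantCoeff_substPS]; exact hf
  rw [eq_comm, PowerSeries.inv_eq_iff_mul_eq_one h1]
  rw [← substPS_mul _ _ _ hg]
  rw [PowerSeries.inv_mul_cancel _ hf, substPS_one]

lemma substPS_id (f : PowerSeries ℂ) : substPS X f = f := by
  ext m
  rw [coeff_substPS, Finset.sum_eq_single m]
  · simp
  · intro n hn hnm
    rw [coeff_X_pow, if_neg (by omega), mul_zero]
  · intro h; simp at h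

lemma substPS_comp (g1 g2 f : PowerSeries ℂ) (hg1 : constantCoeff g1 = 0)
    (hg2 : constantCoeff g2 = 0) :
    substPS g1 (substPS g2 f) = substPS (substPS g1 g2) f := by
  ext m
  rw [coeff_substPS, coeff_substPS]
  have hsub : constantCoeff (substPS g1 g2) = 0 := by
    rw [constantCoeff_substPS]; exact hg2
  calc ∑ n ∈ range (m+1), coeff n (substPS g2 f) * coeff m (g1 ^ n)
      = ∑ n ∈ range (m+1), ∑ u ∈ range (m+1),
          coeff u f * coeff n (g2 ^ u) * coeff m (g1 ^ n) := by
        apply Finset.sum_congr rfl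
        intro n hn
        rw [Finset.mem_range] at hn
        rw [coeff_substPS, Finset.sum_mul]
        rw [← Finset.sum_subset (Finset.range_subset_range.2 (show n+1 ≤ m+1 by omega))]
        intro u _ hu
        rw [Finset.mem_range, not_lt] at hu
        rw [coeff_pow_eq_zero hg2 (by omega), mul_zero, zero_mul]
    _ = ∑ u ∈ range (m+1), coeff u f * coeff m ((substPS g1 g2) ^ u) := by
        rw [Finset.sum_comm]
        apply Finset.sum_congr rfl
        intro u hu
        rw [← substPS_pow _ _ hg1, coeff_substPS, Finset.mul_sum]
        apply Finset.sum_congr rfl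
        intro n _
        ring

/-- the Möbius series X(1+cX)⁻¹ -/
def gmob (c : ℂ) : PowerSeries ℂ := X * (1 + C c * X)⁻¹

lemma constantCoeff_unit (c : ℂ) : constantCoeff (1 + C c * X) ≠ 0 := by
  simp

lemma constantCoeff_gmob (c : ℂ) : constantCoeff (gmob c) = 0 := by
  simp [gmob]

lemma tauSub_eq_substPS (c : ℂ) (f : PowerSeries ℂ) :
    tauSub c f = substPS (gmob c) f := rfl

lemma gmob_zero : gmob 0 = X := by
  simp [gmob, inv_one]

lemma tauSub_zero (f : PowerSeries ℂ) : tauSub 0 f = f := by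
  rw [tauSub_eq_substPS]
  norm_num [gmob_zero, substPS_id]

lemma tauSub_mul (c : ℂ) (f h : PowerSeries ℂ) :
    tauSub c (f * h) = tauSub c f * tauSub c h := by
  rw [tauSub_eq_substPS, tauSub_eq_substPS, tauSub_eq_substPS,
    substPS_mul _ _ _ (constantCoeff_gmob c)]

lemma tauSub_one (c : ℂ) : tauSub c 1 = 1 := substPS_one _

lemma constantCoeff_tauSub (c : ℂ) (f : PowerSeries ℂ) :
    constantCoeff (tauSub c f) = constantCoeff f := constantCoeff_substPS _ _

lemma tauSub_inv (c : ℂ) (f : PowerSeries ℂ) (hf : constantCoeff f ≠ 0) :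
    tauSub c f⁻¹ = (tauSub c f)⁻¹ :=
  substPS_inv _ _ (constantCoeff_gmob c) hf

lemma tauSub_pow (c : ℂ) (f : PowerSeries ℂ) (n : ℕ) :
    tauSub c (f ^ n) = (tauSub c f) ^ n := substPS_pow _ _ (constantCoeff_gmob c) n

lemma gmob_comp (c c' : ℂ) : substPS (gmob c) (gmob c') = gmob (c + c') := by
  set u : PowerSeries ℂ := 1 + C c * X with hu
  set w : PowerSeries ℂ := 1 + C (c + c') * X with hw
  have hcu : constantCoeff u ≠ 0 := constantCoeff_unit c
  have hcw : constantCoeff w ≠ 0 := constantCoeff_unit (c + c')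
  have h1 : substPS (gmob c) (gmob c')
      = gmob c * (1 + C c' * gmob c)⁻¹ := by
    rw [show gmob c' = X * (1 + C c' * X)⁻¹ from rfl,
      substPS_mul _ _ _ (constantCoeff_gmob c), substPS_X _ (constantCoeff_gmob c),
      substPS_inv _ _ (constantCoeff_gmob c) (constantCoeff_unit c'),
      substPS_add, substPS_one, substPS_mul _ _ _ (constantCoeff_gmob c),
      substPS_C, substPS_X _ (constantCoeff_gmob c)]
  rw [h1]
  have h2 : 1 + C c' * gmob c = w * u⁻¹ := by
    have hx : (1 + C c' * gmob c) * u = w * u⁻¹ * u := by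
      rw [show gmob c = X * u⁻¹ from rfl]
      have huu : u⁻¹ * u = 1 := PowerSeries.inv_mul_cancel _ hcu
      calc (1 + C c' * (X * u⁻¹)) * u = u + C c' * X * (u⁻¹ * u) := by ring
        _ = w := by rw [huu, hu, hw]; push_cast [map_add]; ring
        _ = w * (u⁻¹ * u) := by rw [huu, mul_one]
        _ = w * u⁻¹ * u := by ring
    have : IsUnit u := PowerSeries.isUnit_iff_constantCoeff.2 (Ne.isUnit hcu)
    exact this.mul_right_cancel hx
  rw [h2]
  have h3 : (w * u⁻¹)⁻¹ = u * w⁻¹ := by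
    rw [PowerSeries.inv_eq_iff_mul_eq_one]
    · calc u * w⁻¹ * (w * u⁻¹) = w * w⁻¹ * (u⁻¹ * u) := by ring
        _ = 1 := by rw [PowerSeries.inv_mul_cancel _ hcu, PowerSeries.mul_inv_cancel _ hcw, one_mul]
    · simp [hcu, hcw]
  rw [h3, show gmob c = X * u⁻¹ from rfl]
  calc X * u⁻¹ * (u * w⁻¹) = X * w⁻¹ * (u⁻¹ * u) := by ring
    _ = gmob (c + c') := by rw [PowerSeries.inv_mul_cancel _ hcu, mul_one]; rfl

lemma tauSub_tauSub (c c' : ℂ) (f : PowerSeries ℂ) :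
    tauSub c (tauSub c' f) = tauSub (c + c') f := by
  rw [tauSub_eq_substPS, tauSub_eq_substPS, tauSub_eq_substPS,
    substPS_comp _ _ _ (constantCoeff_gmob c) (constantCoeff_gmob c'), gmob_comp]

lemma tauSub_zero_fun (c : ℂ) : tauSub c 0 = 0 := by
  ext m; simp [tauSub]

/-- `τ_c` as a ring hom. -/
def tauHom (c : ℂ) : PowerSeries ℂ →+* PowerSeries ℂ where
  toFun := tauSub c
  map_one' := tauSub_one c
  map_mul' := tauSub_mul c
  map_zero' := tauSub_zero_fun c
  map_add' := fun f h => substPS_add _ f h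

abbrev U := (PowerSeries ℂ)ˣ

/-- `τ_c` on units. -/
def tauU (c : ℂ) : U →* U := Units.map (tauHom c).toMonoidHom

lemma tauU_val (c : ℂ) (u : U) : (tauU c u).val = tauSub c u.val := rfl

lemma tauU_tauU (c c' : ℂ) (u : U) : tauU c (tauU c' u) = tauU (c + c') u := by
  ext
  rw [tauU_val, tauU_val, tauU_val, tauSub_tauSub]

lemma tauU_zero (u : U) : tauU 0 u = u := by
  ext; rw [tauU_val, tauSub_zero]

lemma unit_constantCoeff_ne (u : U) : constantCoeff u.val ≠ 0 := by
  have : IsUnit (constantCoeff u.val) := u.isUnit.map (constantCoeff)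
  exact this.ne_zero

lemma val_inv_unit (u : U) : ((u⁻¹ : U) : PowerSeries ℂ) = (u.val)⁻¹ := by
  rw [eq_comm, PowerSeries.inv_eq_iff_mul_eq_one (unit_constantCoeff_ne u)]
  exact_mod_cast u.inv_mul

/-- `mkU f h` : the unit with value `f`. -/
def mkU (f : PowerSeries ℂ) (h : constantCoeff f = 1) : U :=
  ⟨f, f⁻¹, PowerSeries.mul_inv_cancel f (by rw [h]; exact one_ne_zero),
    PowerSeries.inv_mul_cancel f (by rw [h]; exact one_ne_zero)⟩

@[simp] lemma mkU_val (f : PowerSeries ℂ) (h) : (mkU f h).val = f := rfl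

lemma zpowPS_val (u : U) (k : ℤ) : zpowPS u.val k = ((u ^ k : U) : PowerSeries ℂ) := by
  cases k with
  | ofNat n =>
    rw [zpowPS, show Int.ofNat n = (n : ℤ) from rfl, zpow_natCast, Units.val_pow_eq_pow_val]
  | negSucc n =>
    rw [zpowPS, zpow_negSucc, val_inv_unit, Units.val_pow_eq_pow_val]

abbrev Rc := AddMonoidAlgebra ℤ ℂ

/-- the action of the shift group ring on units -/
def actU (r : Rc) (u : U) : U :=
  ((Finsupp.liftAddHom (α := ℂ) (M := ℤ) (N := Additive U)
    (fun c => (zmultiplesHom (Additive U)) (Additive.ofMul (tauU c u)))) r.coeff).toMul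

lemma actU_add (r s : Rc) (u : U) : actU (r + s) u = actU r u * actU s u := by
  unfold actU; rw [show (r + s).coeff = r.coeff + s.coeff from rfl, map_add]; rfl

lemma actU_zero (u : U) : actU 0 u = 1 := by
  unfold actU; rw [show (0 : Rc).coeff = 0 from rfl, map_zero]; rfl

lemma actU_neg (r : Rc) (u : U) : actU (-r) u = (actU r u)⁻¹ := by
  unfold actU; rw [show (-r).coeff = -r.coeff from rfl, map_neg]; rfl

lemma actU_single (c : ℂ) (n : ℤ) (u : U) :
    actU (AddMonoidAlgebra.single c n) u = (tauU c u) ^ n := by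
  unfold actU
  rw [AddMonoidAlgebra.coeff_single, Finsupp.liftAddHom_apply_single]
  rfl

/-- single shift generator in the group ring -/
def sug (c : ℂ) (n : ℤ) : Rc := AddMonoidAlgebra.single c n

lemma actU_sug (c : ℂ) (n : ℤ) (u : U) : actU (sug c n) u = (tauU c u) ^ n :=
  actU_single c n u

lemma sug_mul (c c' : ℂ) : sug c 1 * sug c' 1 = sug (c + c') 1 := by
  unfold sug
  rw [AddMonoidAlgebra.single_mul_single, one_mul]

lemma sug_zero_one : sug 0 1 = 1 := by
  rw [sug, AddMonoidAlgebra.one_def]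

lemma actU_one (u : U) : actU 1 u = u := by
  have : (1 : Rc) = AddMonoidAlgebra.single (0 : ℂ) (1 : ℤ) := rfl
  rw [this, actU_single, tauU_zero, zpow_one]

lemma actU_mul_u (r : Rc) (u v : U) : actU r (u * v) = actU r u * actU r v := by
  induction r using AddMonoidAlgebra.induction_linear with
  | zero => simp [actU_zero]
  | add f g hf hg => rw [actU_add, actU_add, actU_add, hf, hg, mul_mul_mul_comm]
  | single c n =>
    rw [actU_single, actU_single, actU_single, ← mul_zpow]
    congr 1
    exact map_mul (tauU c) u v

lemma actU_mul (r s : Rc) (u : U) : actU (r * s) u = actU r (actU s u) := by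
  induction r using AddMonoidAlgebra.induction_linear with
  | zero => rw [zero_mul, actU_zero, actU_zero]
  | add f g hf hg => rw [add_mul, actU_add, actU_add, hf, hg]
  | single c n =>
    rw [actU_single]
    induction s using AddMonoidAlgebra.induction_linear with
    | zero => simp [mul_zero, actU_zero]
    | add f g hf hg =>
      rw [mul_add, actU_add, actU_add, map_mul, mul_zpow, hf, hg]
    | single c' n' =>
      rw [AddMonoidAlgebra.single_mul_single, actU_single, actU_single,
        map_zpow, tauU_tauU, ← zpow_mul, mul_comm n n']

/-- constant coefficient on units -/
def ccU : U →* ℂˣ := Units.map (constantCoeff : PowerSeries ℂ →+* ℂ).toMonoidHom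

lemma ccU_tauU (c : ℂ) (u : U) : ccU (tauU c u) = ccU u := by
  ext
  exact constantCoeff_tauSub c u.val

lemma ccU_actU (r : Rc) (u : U) (h : ccU u = 1) : ccU (actU r u) = 1 := by
  induction r using AddMonoidAlgebra.induction_linear with
  | zero => rw [actU_zero, map_one]
  | add f g hf hg => rw [actU_add, map_mul, hf, hg, mul_one]
  | single c n => rw [actU_single, map_zpow, ccU_tauU, h, one_zpow]

lemma ccU_iff (u : U) : ccU u = 1 ↔ constantCoeff u.val = 1 := by
  constructor
  · intro h
    have := congrArg Units.val h
    exact this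
  · intro h
    ext
    exact h

section Sigma
variable {I : Type} [DecidableEq I]

/-- the group-ring element `P_{ji}` -/
def pcoef (a : I → I → ℤ) (d : I → ℤ) (hbar : ℂ) (j i : I) : Rc :=
  ∑ k ∈ Finset.range (a j i).natAbs,
    sug (-(hbar * (d j : ℂ) / 2) * (((a j i).natAbs : ℂ) - 2 * (k : ℂ))) 1

lemma actU_sum {γ : Type*} (s : Finset γ) (r : γ → Rc) (u : U) :
    actU (∑ k ∈ s, r k) u = ∏ k ∈ s, actU (r k) u := by
  classical
  induction s using Finset.cons_induction with
  | empty => simp [actU_zero]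
  | cons x s hx ih => rw [Finset.sum_cons, Finset.prod_cons, actU_add, ih]

lemma sigmaT_bridge (a : I → I → ℤ) (d : I → ℤ) (hbar : ℂ) (j : I) (nu : I → U) :
    sigmaT a d hbar j (fun m => (nu m).val)
      = fun m => ((nu m) * actU (eps m j • pcoef a d hbar j m) (nu j)).val := by
  funext m
  show (nu m).val * _ = _
  rw [Units.val_mul]
  congr 1
  rw [pcoef, Finset.smul_sum, actU_sum, ← Units.coeHom_apply, map_prod]
  apply Finset.prod_congr rfl
  intro k _
  have hs : eps m j • sug (-(hbar * (d j : ℂ) / 2) * (((a j m).natAbs : ℂ) - 2 * (k : ℂ))) 1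
      = sug (-(hbar * (d j : ℂ) / 2) * (((a j m).natAbs : ℂ) - 2 * (k : ℂ))) (eps m j) := by
    unfold sug
    rw [AddMonoidAlgebra.smul_single', mul_one]
  rw [hs, actU_sug, Units.coeHom_apply, ← zpowPS_val]
  rfl

/-- symbolic state -/
structure BState (I : Type) where
  A : Rc
  B : Rc
  C : Rc
  D : Rc
  E : I → Rc
  F : I → Rc

def evalB (i j : I) (L : I → U) (s : BState I) : I → U := fun m =>
  if m = i then actU s.A (L i) * actU s.B (L j)
  else if m = j then actU s.C (L i) * actU s.D (L j)
  else L m * (actU (s.E m) (L i) * actU (s.F m) (L j))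

/-- apply σ of the first slot -/
def stepL (q pij : Rc) (pim : I → Rc) (s : BState I) : BState I :=
  ⟨-(q * s.A), -(q * s.B), s.C + pij * s.A, s.D + pij * s.B,
   fun m => s.E m + pim m * s.A, fun m => s.F m + pim m * s.B⟩

/-- apply σ of the second slot -/
def stepR (q pji : Rc) (pjm : I → Rc) (s : BState I) : BState I :=
  ⟨s.A + pji * s.C, s.B + pji * s.D, -(q * s.C), -(q * s.D),
   fun m => s.E m + pjm m * s.C, fun m => s.F m + pjm m * s.D⟩

def swSt (s : BState I) : BState I := ⟨s.D, s.C, s.B, s.A, s.F, s.E⟩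

lemma evalB_sw (i j : I) (hij : i ≠ j) (L : I → U) (s : BState I) (m : I) :
    evalB i j L s m = evalB j i L (swSt s) m := by
  unfold evalB swSt
  by_cases h1 : m = i
  · subst h1
    rw [if_pos rfl, if_neg hij, if_pos rfl, mul_comm]
  · by_cases h2 : m = j
    · subst h2
      rw [if_neg h1, if_pos rfl, if_pos rfl, mul_comm]
    · rw [if_neg h1, if_neg h2, if_neg h2, if_neg h1, mul_comm (actU (s.E m) (L i))]

end Sigma

section Sigma2
variable {I : Type} [DecidableEq I]

lemma actU_pair (r A B : Rc) (u v : U) :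
    actU r (actU A u * actU B v) = actU (r * A) u * actU (r * B) v := by
  rw [actU_mul_u, ← actU_mul, ← actU_mul]

lemma actU_one_add (r : Rc) (u : U) : u * actU r u = actU (1 + r) u := by
  rw [actU_add, actU_one]

lemma pcoef_diag (a : I → I → ℤ) (d : I → ℤ) (hbar : ℂ) (i : I) (ha : a i i = 2) :
    pcoef a d hbar i i = (sug (-(hbar * (d i : ℂ))) 1 + 1 : Rc) := by
  unfold pcoef
  rw [ha]
  show ∑ k ∈ Finset.range 2, _ = _
  rw [Finset.sum_range_succ, Finset.sum_range_succ, Finset.sum_range_zero, zero_add]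
  have e0 : -(hbar * (d i : ℂ) / 2) * ((((2:ℤ).natAbs : ℕ) : ℂ) - 2 * ((0:ℕ) : ℂ))
      = -(hbar * (d i : ℂ)) := by push_cast; ring
  have e1 : -(hbar * (d i : ℂ) / 2) * ((((2:ℤ).natAbs : ℕ) : ℂ) - 2 * ((1:ℕ) : ℂ))
      = 0 := by push_cast; ring
  rw [e0, e1, sug_zero_one]

lemma eps_self (i : I) : eps i i = -1 := by simp [eps]
lemma eps_ne {i j : I} (h : i ≠ j) : eps i j = 1 := by simp [eps, h]

lemma step_evalL (a : I → I → ℤ) (d : I → ℤ) (hbar : ℂ) (i j : I) (hij : i ≠ j)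
    (hai : a i i = 2) (L : I → U) (s : BState I) :
    sigmaT a d hbar i (fun m => (evalB i j L s m).val)
      = fun m => (evalB i j L
          (stepL (sug (-(hbar * (d i : ℂ))) 1) (pcoef a d hbar i j)
            (fun m => pcoef a d hbar i m) s) m).val := by
  rw [sigmaT_bridge]
  funext m
  congr 1
  have hsi : evalB i j L s i = actU s.A (L i) * actU s.B (L j) := by
    unfold evalB; rw [if_pos rfl]
  by_cases h1 : m = i
  · subst h1
    have hR : evalB m j L (stepL (sug (-(hbar * (d m : ℂ))) 1)
        (pcoef a d hbar m j) (fun m' => pcoef a d hbar m m') s) m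
        = actU (-(sug (-(hbar * (d m : ℂ))) 1 * s.A)) (L m)
          * actU (-(sug (-(hbar * (d m : ℂ))) 1 * s.B)) (L j) := by
      unfold evalB stepL; rw [if_pos rfl]
    rw [hsi, eps_self, pcoef_diag a d hbar m hai, actU_one_add]
    have harith : (1 + (-1 : ℤ) • (sug (-(hbar * (d m : ℂ))) 1 + 1) : Rc)
        = -(sug (-(hbar * (d m : ℂ))) 1) := by
      rw [neg_one_zsmul]; ring
    rw [harith, actU_pair, hR, neg_mul, neg_mul]
  · have hLm1 : eps m i = 1 := eps_ne h1
    by_cases h2 : m = j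
    · have hLm : evalB i j L s m = actU s.C (L i) * actU s.D (L j) := by
        unfold evalB; rw [if_neg h1, if_pos h2]
      have hRm : evalB i j L (stepL (sug (-(hbar * (d i : ℂ))) 1)
          (pcoef a d hbar i j) (fun m' => pcoef a d hbar i m') s) m
          = actU (s.C + pcoef a d hbar i j * s.A) (L i)
            * actU (s.D + pcoef a d hbar i j * s.B) (L j) := by
        unfold evalB stepL; rw [if_neg h1, if_pos h2]
      rw [hLm, hsi, hLm1, one_zsmul, hRm, h2]
      rw [actU_pair, mul_mul_mul_comm, ← actU_add, ← actU_add]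
    · have hLm : evalB i j L s m = L m * (actU (s.E m) (L i) * actU (s.F m) (L j)) := by
        unfold evalB; rw [if_neg h1, if_neg h2]
      have hRm : evalB i j L (stepL (sug (-(hbar * (d i : ℂ))) 1)
          (pcoef a d hbar i j) (fun m' => pcoef a d hbar i m') s) m
          = L m * (actU (s.E m + pcoef a d hbar i m * s.A) (L i)
            * actU (s.F m + pcoef a d hbar i m * s.B) (L j)) := by
        unfold evalB stepL; rw [if_neg h1, if_neg h2]
      rw [hLm, hsi, hLm1, one_zsmul, hRm]
      rw [actU_pair, mul_assoc, mul_mul_mul_comm, ← actU_add, ← actU_add]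

lemma step_evalR (a : I → I → ℤ) (d : I → ℤ) (hbar : ℂ) (i j : I) (hij : i ≠ j)
    (haj : a j j = 2) (L : I → U) (s : BState I) :
    sigmaT a d hbar j (fun m => (evalB i j L s m).val)
      = fun m => (evalB i j L
          (stepR (sug (-(hbar * (d j : ℂ))) 1) (pcoef a d hbar j i)
            (fun m => pcoef a d hbar j m) s) m).val := by
  have h1 : (fun m => (evalB i j L s m).val) = fun m => (evalB j i L (swSt s) m).val :=
    funext fun m => congrArg _ (evalB_sw i j hij L s m)
  rw [h1, step_evalL a d hbar j i hij.symm haj L (swSt s)]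
  funext m
  have h2 : evalB i j L (stepR (sug (-(hbar * (d j : ℂ))) 1) (pcoef a d hbar j i)
      (fun m => pcoef a d hbar j m) s) m
      = evalB j i L (swSt (stepR (sug (-(hbar * (d j : ℂ))) 1) (pcoef a d hbar j i)
        (fun m => pcoef a d hbar j m) s)) m := evalB_sw i j hij L _ m
  rw [h2]
  rfl

def initB (I : Type) : BState I := ⟨1, 0, 0, 1, fun _ => 0, fun _ => 0⟩

def runB (sI sJ : BState I → BState I) : ℕ → Bool → BState I
  | 0, _ => initB I
  | n+1, b => (if b then sI else sJ) (runB sI sJ n (!b))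

lemma braid_semantics (a : I → I → ℤ) (d : I → ℤ) (hbar : ℂ) (i j : I) (hij : i ≠ j)
    (hai : a i i = 2) (haj : a j j = 2) (L : I → U) :
    ∀ (n : ℕ) (b : Bool),
      braidWord (sigmaT a d hbar (if b then i else j)) (sigmaT a d hbar (if b then j else i)) n
          (fun m => (L m).val)
        = fun m => (evalB i j L
            (runB (stepL (sug (-(hbar * (d i : ℂ))) 1) (pcoef a d hbar i j)
                (fun m => pcoef a d hbar i m))
              (stepR (sug (-(hbar * (d j : ℂ))) 1) (pcoef a d hbar j i)
                (fun m => pcoef a d hbar j m)) n b) m).val := by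
  intro n
  induction n with
  | zero =>
    intro b
    funext m
    show (L m).val = (evalB i j L (initB I) m).val
    congr 1
    unfold evalB initB
    by_cases h1 : m = i
    · rw [if_pos h1, actU_one, actU_zero, mul_one, h1]
    · by_cases h2 : m = j
      · rw [if_neg h1, if_pos h2, actU_one, actU_zero, one_mul, h2]
      · rw [if_neg h1, if_neg h2, actU_zero, actU_zero, mul_one, mul_one]
  | succ n ih =>
    intro b
    show (sigmaT a d hbar (if b then i else j)) (braidWord _ _ n (fun m => (L m).val)) = _
    have hswap1 : (if b then j else i) = (if !b then i else j) := by cases b <;> rfl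
    have hswap2 : (if b then i else j) = (if !b then j else i) := by cases b <;> rfl
    rw [hswap2, hswap1, ih (!b)]
    cases b with
    | true =>
      show sigmaT a d hbar i _ = _
      rw [step_evalL a d hbar i j hij hai L]
      rfl
    | false =>
      show sigmaT a d hbar j _ = _
      rw [step_evalR a d hbar i j hij haj L]
      rfl

end Sigma2

section Cases
variable {I : Type} [DecidableEq I]

attribute [ext] BState

lemma runB_succ (sI sJ : BState I → BState I) (n : ℕ) (b : Bool) :
    runB sI sJ (n+1) b = (if b then sI else sJ) (runB sI sJ n (!b)) := rfl

lemma runB_2t (sI sJ : BState I → BState I) : runB sI sJ 2 true = sI (sJ (initB I)) := rfl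
lemma runB_2f (sI sJ : BState I → BState I) : runB sI sJ 2 false = sJ (sI (initB I)) := rfl
lemma runB_3t (sI sJ : BState I → BState I) : runB sI sJ 3 true = sI (sJ (sI (initB I))) := rfl
lemma runB_3f (sI sJ : BState I → BState I) : runB sI sJ 3 false = sJ (sI (sJ (initB I))) := rfl
lemma runB_4t (sI sJ : BState I → BState I) :
    runB sI sJ 4 true = sI (sJ (sI (sJ (initB I)))) := rfl
lemma runB_4f (sI sJ : BState I → BState I) :
    runB sI sJ 4 false = sJ (sI (sJ (sI (initB I)))) := rfl
lemma runB_6t (sI sJ : BState I → BState I) :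
    runB sI sJ 6 true = sI (sJ (sI (sJ (sI (sJ (initB I)))))) := rfl
lemma runB_6f (sI sJ : BState I → BState I) :
    runB sI sJ 6 false = sJ (sI (sJ (sI (sJ (sI (initB I)))))) := rfl

lemma case_t0 (q1 q2 : Rc) (pim pjm : I → Rc) :
    runB (stepL q1 0 pim) (stepR q2 0 pjm) 2 true
      = runB (stepL q1 0 pim) (stepR q2 0 pjm) 2 false := by
  rw [runB_2t, runB_2f]
  unfold stepL stepR initB
  simp only [BState.mk.injEq]
  refine ⟨by ring, by ring, by ring, by ring, funext fun m => by ring, funext fun m => by ring⟩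

lemma case_A2 (s : Rc) (pim pjm : I → Rc) :
    runB (stepL (s*s) s pim) (stepR (s*s) s pjm) 3 true
      = runB (stepL (s*s) s pim) (stepR (s*s) s pjm) 3 false := by
  rw [runB_3t, runB_3f]
  unfold stepL stepR initB
  simp only [BState.mk.injEq]
  refine ⟨by ring, by ring, by ring, by ring, funext fun m => by ring, funext fun m => by ring⟩

lemma case_B2 (q : Rc) (pim pjm : I → Rc) :
    runB (stepL (q*q) q pim) (stepR q (q+1) pjm) 4 true
      = runB (stepL (q*q) q pim) (stepR q (q+1) pjm) 4 false := by
  rw [runB_4t, runB_4f]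
  unfold stepL stepR initB
  simp only [BState.mk.injEq]
  refine ⟨by ring, by ring, by ring, by ring, funext fun m => by ring, funext fun m => by ring⟩

lemma case_G2 (r r' : Rc) (h : r * r' = 1) (pim pjm : I → Rc) :
    runB (stepL (r^6) (r^3) pim) (stepR (r*r) (r^3 + r + r') pjm) 6 true
      = runB (stepL (r^6) (r^3) pim) (stepR (r*r) (r^3 + r + r') pjm) 6 false := by
  rw [runB_6t, runB_6f]
  unfold stepL stepR initB
  simp only [BState.mk.injEq]
  refine ⟨?_, ?_, ?_, ?_, funext fun m => ?_, funext fun m => ?_⟩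
  · linear_combination (r^7*r' + r^8 - r^8*r'^2 - 3*r^9*r' - r^10 - r^11*r' - 2*r^12) * h
  · linear_combination (r^4*r' + r^5 - r^5*r'^2 - 3*r^6*r' - r^7 - r^8*r' - 2*r^9 + r^10*r'
      + r^11 - r^11*r'^2 - 3*r^12*r' - r^13 - r^14*r' - 2*r^15) * h
  · linear_combination (-(r^7) + r^8*r' + r^9 + r^10*r' + 2*r^11) * h
  · linear_combination (-(r^7*r') - r^8 + r^8*r'^2 + 3*r^9*r' + r^10 + r^11*r' + 2*r^12) * h
  · linear_combination ((r^7 - r^8*r' - 2*r^9) * pjm m) * h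
  · linear_combination ((-(r^4*r') - r^5 + r^5*r'^2 + 3*r^6*r' + r^7 + r^8*r' + 2*r^9) * pim m) * h

end Cases

section Core
variable {I : Type} [DecidableEq I]

lemma sug_pow (c : ℂ) (n : ℕ) : (sug c 1) ^ n = sug ((n : ℂ) * c) 1 := by
  induction n with
  | zero =>
    rw [pow_zero, ← sug_zero_one]
    congr 1
    simp
  | succ n ih =>
    rw [pow_succ, ih, sug_mul]
    congr 1
    push_cast
    ring

lemma pcoef_neg_one (a : I → I → ℤ) (d : I → ℤ) (hbar : ℂ) (j i : I) (h : a j i = -1) :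
    pcoef a d hbar j i = sug (-(hbar * (d j : ℂ) / 2)) 1 := by
  unfold pcoef
  rw [h]
  show ∑ k ∈ Finset.range 1, _ = _
  rw [Finset.sum_range_one]
  congr 1
  push_cast
  ring

lemma pcoef_neg_two (a : I → I → ℤ) (d : I → ℤ) (hbar : ℂ) (j i : I) (h : a j i = -2) :
    pcoef a d hbar j i = sug (-(hbar * (d j : ℂ))) 1 + 1 := by
  unfold pcoef
  rw [h]
  show ∑ k ∈ Finset.range 2, _ = _
  rw [Finset.sum_range_succ, Finset.sum_range_succ, Finset.sum_range_zero, zero_add]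
  have e0 : -(hbar * (d j : ℂ) / 2) * ((((-2:ℤ).natAbs : ℕ) : ℂ) - 2 * ((0:ℕ) : ℂ))
      = -(hbar * (d j : ℂ)) := by push_cast; ring
  have e1 : -(hbar * (d j : ℂ) / 2) * ((((-2:ℤ).natAbs : ℕ) : ℂ) - 2 * ((1:ℕ) : ℂ))
      = 0 := by push_cast; ring
  rw [e0, e1, sug_zero_one]

lemma pcoef_neg_three (a : I → I → ℤ) (d : I → ℤ) (hbar : ℂ) (j i : I) (h : a j i = -3) :
    pcoef a d hbar j i = (sug (-(hbar * (d j : ℂ) / 2)) 1) ^ 3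
      + sug (-(hbar * (d j : ℂ) / 2)) 1 + sug (hbar * (d j : ℂ) / 2) 1 := by
  unfold pcoef
  rw [h]
  show ∑ k ∈ Finset.range 3, _ = _
  rw [Finset.sum_range_succ, Finset.sum_range_succ, Finset.sum_range_succ,
    Finset.sum_range_zero, zero_add, sug_pow]
  have e0 : -(hbar * (d j : ℂ) / 2) * ((((-3:ℤ).natAbs : ℕ) : ℂ) - 2 * ((0:ℕ) : ℂ))
      = ((3:ℕ) : ℂ) * (-(hbar * (d j : ℂ) / 2)) := by push_cast; ring
  have e1 : -(hbar * (d j : ℂ) / 2) * ((((-3:ℤ).natAbs : ℕ) : ℂ) - 2 * ((1:ℕ) : ℂ))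
      = -(hbar * (d j : ℂ) / 2) := by push_cast; ring
  have e2 : -(hbar * (d j : ℂ) / 2) * ((((-3:ℤ).natAbs : ℕ) : ℂ) - 2 * ((2:ℕ) : ℂ))
      = hbar * (d j : ℂ) / 2 := by push_cast; ring
  rw [e0, e1, e2]

lemma braid_core (a : I → I → ℤ) (d : I → ℤ) (hbar : ℂ) (i j : I) (hij : i ≠ j)
    (hai : a i i = 2) (haj : a j j = 2)
    (hcase : (a i j = 0 ∧ a j i = 0)
      ∨ (a i j = -1 ∧ a j i = -1 ∧ (d i : ℂ) = (d j : ℂ))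
      ∨ (a i j = -1 ∧ a j i = -2 ∧ (d i : ℂ) = 2 * (d j : ℂ))
      ∨ (a i j = -1 ∧ a j i = -3 ∧ (d i : ℂ) = 3 * (d j : ℂ)))
    (lam : I → PowerSeries ℂ) (hlam : ∀ m, constantCoeff (lam m) = 1) :
    braidWord (sigmaT a d hbar i) (sigmaT a d hbar j) (coxEntry (a i j * a j i)) lam
      = braidWord (sigmaT a d hbar j) (sigmaT a d hbar i) (coxEntry (a i j * a j i)) lam := by
  set L : I → U := fun m => mkU (lam m) (hlam m) with hL
  have hlamL : lam = fun m => (L m).val := funext fun m => rfl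
  have hsem := braid_semantics a d hbar i j hij hai haj L
  have key : ∀ n : ℕ,
      runB (stepL (sug (-(hbar * (d i : ℂ))) 1) (pcoef a d hbar i j)
          (fun m => pcoef a d hbar i m))
        (stepR (sug (-(hbar * (d j : ℂ))) 1) (pcoef a d hbar j i)
          (fun m => pcoef a d hbar j m)) n true
      = runB (stepL (sug (-(hbar * (d i : ℂ))) 1) (pcoef a d hbar i j)
          (fun m => pcoef a d hbar i m))
        (stepR (sug (-(hbar * (d j : ℂ))) 1) (pcoef a d hbar j i)
          (fun m => pcoef a d hbar j m)) n false →
      braidWord (sigmaT a d hbar i) (sigmaT a d hbar j) n lam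
        = braidWord (sigmaT a d hbar j) (sigmaT a d hbar i) n lam := by
    intro n hrun
    rw [hlamL]
    have t1 := hsem n true
    have t2 := hsem n false
    simp only [if_true] at t1
    simp only [Bool.false_eq_true, if_false] at t2
    rw [t1, t2, hrun]
  rcases hcase with ⟨h1, h2⟩ | ⟨h1, h2, h3⟩ | ⟨h1, h2, h3⟩ | ⟨h1, h2, h3⟩
  · rw [h1, h2]
    norm_num [coxEntry]
    apply key 2
    have p1 : pcoef a d hbar i j = 0 := by unfold pcoef; rw [h1]; rfl
    have p2 : pcoef a d hbar j i = 0 := by unfold pcoef; rw [h2]; rfl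
    rw [p1, p2]
    exact case_t0 _ _ _ _
  · rw [h1, h2]
    norm_num [coxEntry]
    apply key 3
    set s : Rc := sug (-(hbar * (d j : ℂ) / 2)) 1 with hs
    have p1 : pcoef a d hbar i j = s := by
      rw [pcoef_neg_one a d hbar i j h1, hs]
      congr 2
      rw [h3]
    have p2 : pcoef a d hbar j i = s := pcoef_neg_one a d hbar j i h2
    have q1 : sug (-(hbar * (d i : ℂ))) 1 = s * s := by
      rw [hs, sug_mul]
      congr 1
      rw [h3]; ring
    have q2 : sug (-(hbar * (d j : ℂ))) 1 = s * s := by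
      rw [hs, sug_mul]
      congr 1
      ring
    rw [p1, p2, q1, q2]
    exact case_A2 _ _ _
  · rw [h1, h2]
    norm_num [coxEntry]
    apply key 4
    set q : Rc := sug (-(hbar * (d j : ℂ))) 1 with hq
    have p1 : pcoef a d hbar i j = q := by
      rw [pcoef_neg_one a d hbar i j h1, hq]
      congr 1
      rw [h3]; ring
    have p2 : pcoef a d hbar j i = q + 1 := pcoef_neg_two a d hbar j i h2
    have q1 : sug (-(hbar * (d i : ℂ))) 1 = q * q := by
      rw [hq, sug_mul]
      congr 1
      rw [h3]; ring
    rw [p1, p2, q1]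
    exact case_B2 _ _ _
  · rw [h1, h2]
    norm_num [coxEntry]
    apply key 6
    set r : Rc := sug (-(hbar * (d j : ℂ) / 2)) 1 with hr
    set r' : Rc := sug (hbar * (d j : ℂ) / 2) 1 with hr'
    have hrr' : r * r' = 1 := by
      rw [hr, hr', sug_mul, show -(hbar * (d j : ℂ) / 2) + hbar * (d j : ℂ) / 2 = 0 by ring,
        sug_zero_one]
    have p1 : pcoef a d hbar i j = r ^ 3 := by
      rw [pcoef_neg_one a d hbar i j h1, hr, sug_pow]
      congr 1
      rw [h3]; push_cast; ring
    have p2 : pcoef a d hbar j i = r ^ 3 + r + r' := by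
      rw [pcoef_neg_three a d hbar j i h2]
    have q1 : sug (-(hbar * (d i : ℂ))) 1 = r ^ 6 := by
      rw [hr, sug_pow]
      congr 1
      rw [h3]; push_cast; ring
    have q2 : sug (-(hbar * (d j : ℂ))) 1 = r * r := by
      rw [hr, sug_mul]
      congr 1
      ring
    rw [p1, p2, q1, q2]
    exact case_G2 _ _ hrr' _ _

end Core

section Main
variable {I : Type} [DecidableEq I]

lemma cancel₁ (e : ℂ) : (-(sug e 1) : Rc) * (-(sug (-e) 1)) = 1 := by
  rw [neg_mul_neg, sug_mul, add_neg_cancel, sug_zero_one]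

lemma cancel₂ (e : ℂ) : (-(sug (-e) 1) : Rc) * (-(sug e 1)) = 1 := by
  rw [neg_mul_neg, sug_mul, neg_add_cancel, sug_zero_one]

lemma actU_cancel (r r' : Rc) (h : r * r' = 1) (u : U) : actU r (actU r' u) = u := by
  rw [← actU_mul, h, actU_one]

lemma sigma_diag_unit (a : I → I → ℤ) (d : I → ℤ) (hbar : ℂ) (j : I) (haj : a j j = 2)
    (u : U) :
    u * actU (eps j j • pcoef a d hbar j j) u
      = actU (-(sug (-(hbar * (d j : ℂ))) 1)) u := by
  rw [eps_self, pcoef_diag a d hbar j haj, actU_one_add]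
  congr 1
  rw [neg_one_zsmul]
  ring

lemma sigmaT_mul_lemma (a : I → I → ℤ) (d : I → ℤ) (hbar : ℂ) (j : I)
    (lam mu : I → PowerSeries ℂ) (hl : ∀ m, constantCoeff (lam m) = 1)
    (hm : ∀ m, constantCoeff (mu m) = 1) :
    sigmaT a d hbar j (lam * mu) = sigmaT a d hbar j lam * sigmaT a d hbar j mu := by
  set L : I → U := fun m => mkU (lam m) (hl m) with hLdef
  set M : I → U := fun m => mkU (mu m) (hm m) with hMdef
  have h1 : lam * mu = fun m => ((L m * M m : U) : PowerSeries ℂ) := by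
    funext m
    rw [Pi.mul_apply]
    rfl
  have h2 : lam = fun m => ((L m : U) : PowerSeries ℂ) := funext fun m => rfl
  have h3 : mu = fun m => ((M m : U) : PowerSeries ℂ) := funext fun m => rfl
  rw [h1, h2, h3, sigmaT_bridge, sigmaT_bridge, sigmaT_bridge]
  funext m
  rw [Pi.mul_apply, ← Units.val_mul]
  congr 1
  rw [actU_mul_u, mul_mul_mul_comm]

lemma sigmaT_mem (a : I → I → ℤ) (d : I → ℤ) (hbar : ℂ) (j : I)
    (lam : I → PowerSeries ℂ) (hl : ∀ m, constantCoeff (lam m) = 1) :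
    ∀ m, constantCoeff (sigmaT a d hbar j lam m) = 1 := by
  intro m
  set L : I → U := fun m => mkU (lam m) (hl m) with hLdef
  have h2 : lam = fun m => ((L m : U) : PowerSeries ℂ) := funext fun m => rfl
  rw [h2, sigmaT_bridge]
  apply (ccU_iff _).1
  rw [map_mul, ccU_actU _ _ ((ccU_iff _).2 (hl j)), mul_one]
  exact (ccU_iff _).2 (hl m)

lemma sigmaT_bijOn (a : I → I → ℤ) (d : I → ℤ) (hbar : ℂ) (j : I) (haj : a j j = 2) :
    Set.BijOn (sigmaT a d hbar j) (Tset I) (Tset I) := by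
  refine ⟨fun lam hl => sigmaT_mem a d hbar j lam hl, ?_, ?_⟩
  · -- InjOn
    intro lam hl lam' hl' heq
    set L : I → U := fun m => mkU (lam m) (hl m) with hLdef
    set L' : I → U := fun m => mkU (lam' m) (hl' m) with hLdef'
    have h2 : lam = fun m => ((L m : U) : PowerSeries ℂ) := funext fun m => rfl
    have h2' : lam' = fun m => ((L' m : U) : PowerSeries ℂ) := funext fun m => rfl
    rw [h2, h2', sigmaT_bridge, sigmaT_bridge] at heq
    have hj : L j = L' j := by
      have hval := congrFun heq j
      have hu : (L j * actU (eps j j • pcoef a d hbar j j) (L j))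
          = (L' j * actU (eps j j • pcoef a d hbar j j) (L' j)) := Units.ext hval
      rw [sigma_diag_unit a d hbar j haj, sigma_diag_unit a d hbar j haj] at hu
      have h5 := congrArg (actU (-(sug (hbar * (d j : ℂ)) 1))) hu
      rwa [actU_cancel _ _ (cancel₁ (hbar * (d j : ℂ))),
        actU_cancel _ _ (cancel₁ (hbar * (d j : ℂ)))] at h5
    rw [h2, h2']
    funext m
    have hvm := congrFun heq m
    rw [← hj] at hvm
    have hum := mul_right_cancel (Units.ext hvm)
    rw [hum]
  · -- SurjOn
    intro mu hmu
    have hmu' : ∀ m, constantCoeff (mu m) = 1 := hmu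
    set M : I → U := fun m => mkU (mu m) (hmu' m) with hMdef
    set e : ℂ := hbar * (d j : ℂ) with he
    set nu : I → U := fun m =>
      if m = j then actU (-(sug e 1)) (M j)
      else M m * actU (pcoef a d hbar j m * sug e 1) (M j) with hnu
    have hccnu : ∀ m, constantCoeff ((nu m : U) : PowerSeries ℂ) = 1 := by
      intro m
      apply (ccU_iff _).1
      by_cases h1 : m = j
      · simp only [hnu, if_pos h1]
        exact ccU_actU _ _ ((ccU_iff _).2 (hmu' j))
      · simp only [hnu, if_neg h1]
        rw [map_mul, ccU_actU _ _ ((ccU_iff _).2 (hmu' j)), mul_one]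
        exact (ccU_iff _).2 (hmu' m)
    refine ⟨fun m => ((nu m : U) : PowerSeries ℂ), hccnu, ?_⟩
    rw [sigmaT_bridge]
    funext m
    by_cases h1 : m = j
    · subst h1
      have hnuj : nu m = actU (-(sug e 1)) (M m) := by rw [hnu]; simp
      rw [sigma_diag_unit a d hbar m haj, hnuj,
        actU_cancel _ _ (cancel₂ e)]
      rfl
    · have hnum : nu m = M m * actU (pcoef a d hbar j m * sug e 1) (M j) := by
        rw [hnu]; simp [h1]
      have hnuj : nu j = actU (-(sug e 1)) (M j) := by rw [hnu]; simp
      rw [eps_ne h1, one_zsmul, hnum, hnuj, ← actU_mul, mul_assoc, ← actU_add]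
      have hz : (pcoef a d hbar j m * sug e 1 + pcoef a d hbar j m * -(sug e 1) : Rc) = 0 := by
        ring
      rw [hz, actU_zero, mul_one]
      rfl

lemma cartan_cases (a : I → I → ℤ) (d : I → ℤ) (i j : I) (hij : i ≠ j)
    (haij : a i j ≤ 0) (haji : a j i ≤ 0) (hb : a i j * a j i ≤ 3)
    (hd : d i * a i j = d j * a j i) (hdi : 0 < d i) (hdj : 0 < d j) :
    ((a i j = 0 ∧ a j i = 0)
      ∨ (a i j = -1 ∧ a j i = -1 ∧ d i = d j)
      ∨ (a i j = -1 ∧ a j i = -2 ∧ d i = 2 * d j)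
      ∨ (a i j = -1 ∧ a j i = -3 ∧ d i = 3 * d j))
    ∨ ((a j i = 0 ∧ a i j = 0)
      ∨ (a j i = -1 ∧ a i j = -1 ∧ d j = d i)
      ∨ (a j i = -1 ∧ a i j = -2 ∧ d j = 2 * d i)
      ∨ (a j i = -1 ∧ a i j = -3 ∧ d j = 3 * d i)) := by
  set x := a i j with hx
  set y := a j i with hy
  by_cases hz : x = 0
  · left; left
    constructor
    · exact hz
    · rw [hz, mul_zero] at hd
      rcases mul_eq_zero.1 hd.symm with h | h
      · omega
      · exact h
  · by_cases hz2 : y = 0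
    · rw [hz2, mul_zero] at hd
      rcases mul_eq_zero.1 hd with h | h
      · omega
      · exact absurd h hz
    · have hx1 : x ≤ -1 := by omega
      have hy1 : y ≤ -1 := by omega
      have hx3 : -3 ≤ x := by nlinarith
      have hy3 : -3 ≤ y := by nlinarith
      interval_cases x <;> interval_cases y <;> omega

end Main


/-- each `σ_j` is a group automorphism of `𝒯^I`, and the braid relations
of order `m_{ij}` hold. -/
theorem sigmaT_automorphism_and_braid
    {I : Type} [Fintype I] [DecidableEq I] (𝒞 : FiniteCartan I) (hbar : ℂ) (hhbar : hbar ≠ 0) :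
    (∀ j : I, Set.BijOn (sigmaT 𝒞.a 𝒞.d hbar j) (Tset I) (Tset I)) ∧
    (∀ j : I, ∀ lam mu : I → PowerSeries ℂ, lam ∈ Tset I → mu ∈ Tset I →
      sigmaT 𝒞.a 𝒞.d hbar j (lam * mu) = sigmaT 𝒞.a 𝒞.d hbar j lam * sigmaT 𝒞.a 𝒞.d hbar j mu) ∧
    (∀ i j : I, i ≠ j →
      Set.EqOn (braidWord (sigmaT 𝒞.a 𝒞.d hbar i) (sigmaT 𝒞.a 𝒞.d hbar j) (𝒞.cm i j))
        (braidWord (sigmaT 𝒞.a 𝒞.d hbar j) (sigmaT 𝒞.a 𝒞.d hbar i) (𝒞.cm i j)) (Tset I)) := by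
  refine ⟨fun j => sigmaT_bijOn 𝒞.a 𝒞.d hbar j (𝒞.a_diag j),
    fun j lam mu hl hm => sigmaT_mul_lemma 𝒞.a 𝒞.d hbar j lam mu hl hm, ?_⟩
  intro i j hij lam hlam
  rw [𝒞.cm_offdiag i j hij]
  have hcases := cartan_cases 𝒞.a 𝒞.d i j hij (𝒞.a_offdiag_nonpos i j hij)
    (𝒞.a_offdiag_nonpos j i hij.symm) (𝒞.a_bound i j hij) (𝒞.d_symmetrizes i j)
    (𝒞.d_pos i) (𝒞.d_pos j)
  rcases hcases with hc | hc
  · have hc' : (𝒞.a i j = 0 ∧ 𝒞.a j i = 0)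
        ∨ (𝒞.a i j = -1 ∧ 𝒞.a j i = -1 ∧ (𝒞.d i : ℂ) = (𝒞.d j : ℂ))
        ∨ (𝒞.a i j = -1 ∧ 𝒞.a j i = -2 ∧ (𝒞.d i : ℂ) = 2 * (𝒞.d j : ℂ))
        ∨ (𝒞.a i j = -1 ∧ 𝒞.a j i = -3 ∧ (𝒞.d i : ℂ) = 3 * (𝒞.d j : ℂ)) := by
      rcases hc with ⟨h1, h2⟩ | ⟨h1, h2, h3⟩ | ⟨h1, h2, h3⟩ | ⟨h1, h2, h3⟩
      · exact Or.inl ⟨h1, h2⟩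
      · exact Or.inr (Or.inl ⟨h1, h2, by exact_mod_cast congrArg (Int.cast : ℤ → ℂ) h3⟩)
      · exact Or.inr (Or.inr (Or.inl ⟨h1, h2, by push_cast [h3]; ring⟩))
      · exact Or.inr (Or.inr (Or.inr ⟨h1, h2, by push_cast [h3]; ring⟩))
    exact braid_core 𝒞.a 𝒞.d hbar i j hij (𝒞.a_diag i) (𝒞.a_diag j) hc' lam hlam
  · have hc' : (𝒞.a j i = 0 ∧ 𝒞.a i j = 0)
        ∨ (𝒞.a j i = -1 ∧ 𝒞.a i j = -1 ∧ (𝒞.d j : ℂ) = (𝒞.d i : ℂ))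
        ∨ (𝒞.a j i = -1 ∧ 𝒞.a i j = -2 ∧ (𝒞.d j : ℂ) = 2 * (𝒞.d i : ℂ))
        ∨ (𝒞.a j i = -1 ∧ 𝒞.a i j = -3 ∧ (𝒞.d j : ℂ) = 3 * (𝒞.d i : ℂ)) := by
      rcases hc with ⟨h1, h2⟩ | ⟨h1, h2, h3⟩ | ⟨h1, h2, h3⟩ | ⟨h1, h2, h3⟩
      · exact Or.inl ⟨h1, h2⟩
      · exact Or.inr (Or.inl ⟨h1, h2, by exact_mod_cast congrArg (Int.cast : ℤ → ℂ) h3⟩)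
      · exact Or.inr (Or.inr (Or.inl ⟨h1, h2, by push_cast [h3]; ring⟩))
      · exact Or.inr (Or.inr (Or.inr ⟨h1, h2, by push_cast [h3]; ring⟩))
    have hcomm : 𝒞.a j i * 𝒞.a i j = 𝒞.a i j * 𝒞.a j i := mul_comm _ _
    have := braid_core 𝒞.a 𝒞.d hbar j i hij.symm (𝒞.a_diag j) (𝒞.a_diag i) hc' lam hlam
    rw [hcomm] at this
    exact this.symm
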